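/- Let G = (A ∪ B ∪ C, E) be a finite 3-partite undirected graph and let D be the directed graph constructed from G as in the {s,*}-EdgeBiCut reduction. Let R ⊆ A ∪ B ∪ C with corresponding vertex-arc set F := {(v₁,v₂) : v ∈ R}. If R is not a vertex cover of G, then every vertex w of D has, in the directed graph obtained from D by deleting the arcs in F, a directed path from s to w or a directed path from w to s. -/
import Mathlib


/-- The arcs of the digraph `D` of the `{s,*}`-EdgeBiCut reduction from a 3-partite
graph `G` with parts `A`, `B`, `C`. Vertices: `Sum.inl (v, false)` is the first copy
`v₁`, `Sum.inl (v, true)` is the second copy `v₂`, `s = Sum.inr false`,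
`t = Sum.inr true`. -/
def sbArc {V : Type*} (G : SimpleGraph V) (A B C : Set V) :
    ((V × Bool) ⊕ Bool) → ((V × Bool) ⊕ Bool) → Prop := fun x y =>
  match x, y with
  -- vertex arcs (v₁, v₂)
  | Sum.inl (v, false), Sum.inl (w, true) => v = w
  -- backward arcs (c₁, a₁)
  | Sum.inl (v, false), Sum.inl (w, false) => v ∈ C ∧ w ∈ A
  -- backward arcs (c₂, a₂)
  | Sum.inl (v, true), Sum.inl (w, true) => v ∈ C ∧ w ∈ A
  -- forward arcs (a₂,b₁), (a₂,c₁), (b₂,c₁) for edges of G; backward AA and CC arcs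
  | Sum.inl (v, true), Sum.inl (w, false) =>
      (G.Adj v w ∧ ((v ∈ A ∧ w ∈ B) ∨ (v ∈ A ∧ w ∈ C) ∨ (v ∈ B ∧ w ∈ C))) ∨
      (v ∈ A ∧ w ∈ A) ∨ (v ∈ C ∧ w ∈ C)
  -- arcs (s, a₁) and (s, b₁)
  | Sum.inr false, Sum.inl (w, false) => w ∈ A ∨ w ∈ B
  -- arcs (t, a₁)
  | Sum.inr true, Sum.inl (w, false) => w ∈ A
  -- arcs (b₂, s) and (c₂, s)
  | Sum.inl (v, true), Sum.inr false => v ∈ B ∨ v ∈ C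
  -- arcs (c₂, t)
  | Sum.inl (v, true), Sum.inr true => v ∈ C
  | _, _ => False

section Aux

variable {V : Type*} {G : SimpleGraph V} {A B C R : Set V}

/-- The arc relation after deleting vertex arcs of `R`. -/
private def sbRel (G : SimpleGraph V) (A B C R : Set V) :
    ((V × Bool) ⊕ Bool) → ((V × Bool) ⊕ Bool) → Prop :=
  fun x y => sbArc G A B C x y ∧
    ¬ ∃ v ∈ R, x = Sum.inl (v, false) ∧ y = Sum.inl (v, true)

private lemma vertexArc {v : V} (hv : v ∉ R) :
    sbRel G A B C R (Sum.inl (v, false)) (Sum.inl (v, true)) := by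
  refine ⟨rfl, ?_⟩
  rintro ⟨u, hu, h1, h2⟩
  obtain rfl : v = u := by simpa using h1
  exact hv hu

private lemma arc_s_v1 {v : V} (hv : v ∈ A ∨ v ∈ B) :
    sbRel G A B C R (Sum.inr false) (Sum.inl (v, false)) :=
  ⟨hv, by simp⟩

private lemma arc_t_v1 {v : V} (hv : v ∈ A) :
    sbRel G A B C R (Sum.inr true) (Sum.inl (v, false)) :=
  ⟨hv, by simp⟩

private lemma arc_v2_s {v : V} (hv : v ∈ B ∨ v ∈ C) :
    sbRel G A B C R (Sum.inl (v, true)) (Sum.inr false) :=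
  ⟨hv, by simp⟩

private lemma arc_v2_t {v : V} (hv : v ∈ C) :
    sbRel G A B C R (Sum.inl (v, true)) (Sum.inr true) :=
  ⟨hv, by simp⟩

private lemma arc_c1_a1 {c a : V} (hc : c ∈ C) (ha : a ∈ A) :
    sbRel G A B C R (Sum.inl (c, false)) (Sum.inl (a, false)) :=
  ⟨⟨hc, ha⟩, by simp⟩

private lemma arc_c2_a2 {c a : V} (hc : c ∈ C) (ha : a ∈ A) :
    sbRel G A B C R (Sum.inl (c, true)) (Sum.inl (a, true)) :=
  ⟨⟨hc, ha⟩, by simp⟩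

private lemma arc_v2_w1 {v w : V}
    (h : (G.Adj v w ∧ ((v ∈ A ∧ w ∈ B) ∨ (v ∈ A ∧ w ∈ C) ∨ (v ∈ B ∧ w ∈ C))) ∨
      (v ∈ A ∧ w ∈ A) ∨ (v ∈ C ∧ w ∈ C)) :
    sbRel G A B C R (Sum.inl (v, true)) (Sum.inl (w, false)) :=
  ⟨h, by simp⟩

/-- If `a ∈ A` and there is a path from `a₁` to `s`, everything is connected to `s`. -/
private lemma hub1 (hcover : A ∪ B ∪ C = Set.univ) {a : V} (ha : a ∈ A)
    (hpath : Relation.ReflTransGen (sbRel G A B C R) (Sum.inl (a, false)) (Sum.inr false)) :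
    ∀ w, Relation.ReflTransGen (sbRel G A B C R) (Sum.inr false) w ∨
      Relation.ReflTransGen (sbRel G A B C R) w (Sum.inr false) := by
  intro w
  obtain (⟨v, b⟩ | b) := w
  · have hv : v ∈ A ∪ B ∪ C := hcover ▸ Set.mem_univ v
    cases b with
    | false =>
      rcases hv with (hv | hv) | hv
      · exact Or.inl (Relation.ReflTransGen.single (arc_s_v1 (Or.inl hv)))
      · exact Or.inl (Relation.ReflTransGen.single (arc_s_v1 (Or.inr hv)))
      · exact Or.inr (Relation.ReflTransGen.head (arc_c1_a1 hv ha) hpath)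
    | true =>
      rcases hv with (hv | hv) | hv
      · exact Or.inr (Relation.ReflTransGen.head
          (arc_v2_w1 (Or.inr (Or.inl ⟨hv, ha⟩))) hpath)
      · exact Or.inr (Relation.ReflTransGen.single (arc_v2_s (Or.inl hv)))
      · exact Or.inr (Relation.ReflTransGen.single (arc_v2_s (Or.inr hv)))
  · cases b with
    | false => exact Or.inl Relation.ReflTransGen.refl
    | true => exact Or.inr (Relation.ReflTransGen.head (arc_t_v1 ha) hpath)

/-- If `c ∈ C` and there is a path from `s` to `c₂`, everything is connected to `s`. -/
private lemma hub2 (hcover : A ∪ B ∪ C = Set.univ) {c : V} (hc : c ∈ C)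
    (hpath : Relation.ReflTransGen (sbRel G A B C R) (Sum.inr false) (Sum.inl (c, true))) :
    ∀ w, Relation.ReflTransGen (sbRel G A B C R) (Sum.inr false) w ∨
      Relation.ReflTransGen (sbRel G A B C R) w (Sum.inr false) := by
  intro w
  obtain (⟨v, b⟩ | b) := w
  · have hv : v ∈ A ∪ B ∪ C := hcover ▸ Set.mem_univ v
    cases b with
    | false =>
      rcases hv with (hv | hv) | hv
      · exact Or.inl (Relation.ReflTransGen.single (arc_s_v1 (Or.inl hv)))
      · exact Or.inl (Relation.ReflTransGen.single (arc_s_v1 (Or.inr hv)))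
      · exact Or.inl (hpath.tail (arc_v2_w1 (Or.inr (Or.inr ⟨hc, hv⟩))))
    | true =>
      rcases hv with (hv | hv) | hv
      · exact Or.inl (hpath.tail (arc_c2_a2 hc hv))
      · exact Or.inr (Relation.ReflTransGen.single (arc_v2_s (Or.inl hv)))
      · exact Or.inr (Relation.ReflTransGen.single (arc_v2_s (Or.inr hv)))
  · cases b with
    | false => exact Or.inl Relation.ReflTransGen.refl
    | true => exact Or.inl (hpath.tail (arc_v2_t hc))

end Aux

/-- if `R` is not a vertex cover of the 3-partite graph `G`, then after
deleting the vertex arcs `{(v₁,v₂) : v ∈ R}` from `D`, every vertex `w` of `D` has a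
directed path from `s` to `w` or a directed path from `w` to `s`. -/
theorem stmt_12 {V : Type*} [Fintype V] (G : SimpleGraph V) (A B C : Set V)
    (hAB : Disjoint A B) (hAC : Disjoint A C) (hBC : Disjoint B C)
    (hcover : A ∪ B ∪ C = Set.univ)
    (hpartite : ∀ x y, G.Adj x y →
      ¬ ((x ∈ A ∧ y ∈ A) ∨ (x ∈ B ∧ y ∈ B) ∨ (x ∈ C ∧ y ∈ C)))
    (R : Set V) (hnvc : ¬ ∀ x y, G.Adj x y → x ∈ R ∨ y ∈ R) :
    ∀ w : (V × Bool) ⊕ Bool,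
      Relation.ReflTransGen
        (fun x y => sbArc G A B C x y ∧
          ¬ ∃ v ∈ R, x = Sum.inl (v, false) ∧ y = Sum.inl (v, true))
        (Sum.inr false) w ∨
      Relation.ReflTransGen
        (fun x y => sbArc G A B C x y ∧
          ¬ ∃ v ∈ R, x = Sum.inl (v, false) ∧ y = Sum.inl (v, true))
        w (Sum.inr false) := by
  push_neg at hnvc
  obtain ⟨x, y, hxy, hxR, hyR⟩ := hnvc
  -- Case A-B: path a₁ → a₂ → b₁ → b₂ → s
  have caseAB : ∀ a b : V, G.Adj a b → a ∉ R → b ∉ R → a ∈ A → b ∈ B →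
      ∀ w, Relation.ReflTransGen (sbRel G A B C R) (Sum.inr false) w ∨
        Relation.ReflTransGen (sbRel G A B C R) w (Sum.inr false) := by
    intro a b hab haR hbR ha hb
    refine hub1 hcover ha ?_
    exact (((Relation.ReflTransGen.single (vertexArc haR)).tail
      (arc_v2_w1 (Or.inl ⟨hab, Or.inl ⟨ha, hb⟩⟩))).tail (vertexArc hbR)).tail
      (arc_v2_s (Or.inl hb))
  -- Case A-C: path a₁ → a₂ → c₁ → c₂ → s
  have caseAC : ∀ a c : V, G.Adj a c → a ∉ R → c ∉ R → a ∈ A → c ∈ C →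
      ∀ w, Relation.ReflTransGen (sbRel G A B C R) (Sum.inr false) w ∨
        Relation.ReflTransGen (sbRel G A B C R) w (Sum.inr false) := by
    intro a c hac haR hcR ha hc
    refine hub1 hcover ha ?_
    exact (((Relation.ReflTransGen.single (vertexArc haR)).tail
      (arc_v2_w1 (Or.inl ⟨hac, Or.inr (Or.inl ⟨ha, hc⟩)⟩))).tail (vertexArc hcR)).tail
      (arc_v2_s (Or.inr hc))
  -- Case B-C: path s → b₁ → b₂ → c₁ → c₂
  have caseBC : ∀ b c : V, G.Adj b c → b ∉ R → c ∉ R → b ∈ B → c ∈ C →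
      ∀ w, Relation.ReflTransGen (sbRel G A B C R) (Sum.inr false) w ∨
        Relation.ReflTransGen (sbRel G A B C R) w (Sum.inr false) := by
    intro b c hbc hbR hcR hb hc
    refine hub2 hcover hc ?_
    exact (((Relation.ReflTransGen.single (arc_s_v1 (Or.inr hb))).tail
      (vertexArc hbR)).tail
      (arc_v2_w1 (Or.inl ⟨hbc, Or.inr (Or.inr ⟨hb, hc⟩)⟩))).tail (vertexArc hcR)
  have hx : x ∈ A ∪ B ∪ C := hcover ▸ Set.mem_univ x
  have hy : y ∈ A ∪ B ∪ C := hcover ▸ Set.mem_univ y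
  rcases hx with (hxA | hxB) | hxC <;> rcases hy with (hyA | hyB) | hyC
  · exact absurd (Or.inl ⟨hxA, hyA⟩) (hpartite x y hxy)
  · exact caseAB x y hxy hxR hyR hxA hyB
  · exact caseAC x y hxy hxR hyR hxA hyC
  · exact caseAB y x hxy.symm hyR hxR hyA hxB
  · exact absurd (Or.inr (Or.inl ⟨hxB, hyB⟩)) (hpartite x y hxy)
  · exact caseBC x y hxy hxR hyR hxB hyC
  · exact caseAC y x hxy.symm hyR hxR hyA hxC
  · exact caseBC y x hxy.symm hyR hxR hyB hxC
  · exact absurd (Or.inr (Or.inr ⟨hxC, hyC⟩)) (hpartite x y hxy)
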